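/- arXiv:1804.04597 — 2 statements merged into one kernel-verified Lean document; each statement's English description precedes it below -/
import Mathlib

section
/- Let P be a composition operator on ℓ spaces of the form D_{k,i₁} D_{i₁,i₂} ⋯ D_{i_N,l}, where each factor D_{α,β} is 'localized at X_α ∩ X_β' in the sense that multiplication by any smooth compactly supported function vanishing near X_α ∩ X_β on either side yields an operator of lower order. Then for any smooth compactly supported φ vanishing in a neighborhood of the intersection X_k ∩ X_{i₁} ∩ ⋯ ∩ X_{i_N} ∩ X_l, the compositions φ P and P φ are of lower order; abstractly: if T₁, T₂ are bounded operators between normed modules over C(X) and T_j is localized at a closed set Z_j (meaning φT_j and T_jφ are compact for all continuous φ vanishing on Z_j), and T₁ and T₂ commute with multiplications up to compact operators, then T₁T₂ is localized at Z₁ ∩ Z₂. -/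
open MeasureTheory

variable {X : Type*} [MetricSpace X] [CompactSpace X]

/-- `T : H₁ → H₂` is localized at the closed set `Z ⊆ X` (relative to the multiplication
actions `π₁, π₂` of `C(X)`): for every `φ ∈ C(X)` vanishing on a neighborhood of `Z`,
both `π₂(φ) ∘ T` and `T ∘ π₁(φ)` are compact. -/
def IsLocalizedAt {H₁ H₂ : Type*}
    [NormedAddCommGroup H₁] [InnerProductSpace ℂ H₁] [CompleteSpace H₁]
    [NormedAddCommGroup H₂] [InnerProductSpace ℂ H₂] [CompleteSpace H₂]
    (π₁ : C(X, ℂ) →⋆ₐ[ℂ] (H₁ →L[ℂ] H₁)) (π₂ : C(X, ℂ) →⋆ₐ[ℂ] (H₂ →L[ℂ] H₂))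
    (T : H₁ →L[ℂ] H₂) (Z : Set X) : Prop :=
  ∀ φ : C(X, ℂ), (∃ U : Set X, IsOpen U ∧ Z ⊆ U ∧ ∀ x ∈ U, φ x = 0) →
    IsCompactOperator ⇑(π₂ φ ∘L T) ∧ IsCompactOperator ⇑(T ∘L π₁ φ)

/-- `T` is pseudolocal: `π₂(φ) T - T π₁(φ)` is compact for every `φ ∈ C(X)`. -/
def IsPseudolocal {H₁ H₂ : Type*}
    [NormedAddCommGroup H₁] [InnerProductSpace ℂ H₁] [CompleteSpace H₁]
    [NormedAddCommGroup H₂] [InnerProductSpace ℂ H₂] [CompleteSpace H₂]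
    (π₁ : C(X, ℂ) →⋆ₐ[ℂ] (H₁ →L[ℂ] H₁)) (π₂ : C(X, ℂ) →⋆ₐ[ℂ] (H₂ →L[ℂ] H₂))
    (T : H₁ →L[ℂ] H₂) : Prop :=
  ∀ φ : C(X, ℂ), IsCompactOperator ⇑(π₂ φ ∘L T - T ∘L π₁ φ)

/-- Urysohn with neighborhoods: disjoint closed sets can be separated by a continuous function
vanishing on a neighborhood of the first and equal to `1` on a neighborhood of the second. -/
lemma urysohn_nbhd {A B : Set X} (hA : IsClosed A) (hB : IsClosed B) (hAB : Disjoint A B) :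
    ∃ ψ : C(X, ℝ), ∃ V₁ V₂ : Set X, IsOpen V₁ ∧ IsOpen V₂ ∧ A ⊆ V₁ ∧ B ⊆ V₂ ∧
      (∀ x ∈ V₁, ψ x = 0) ∧ (∀ x ∈ V₂, ψ x = 1) := by
  obtain ⟨U₁, U₂, hU₁, hU₂, hAU₁, hBU₂, hU₁₂⟩ := normal_separation hA hB hAB
  obtain ⟨V₁, hV₁, hAV₁, hV₁c⟩ := normal_exists_closure_subset hA hU₁ hAU₁
  obtain ⟨V₂, hV₂, hBV₂, hV₂c⟩ := normal_exists_closure_subset hB hU₂ hBU₂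
  have hdisj : Disjoint (closure V₁) (closure V₂) :=
    hU₁₂.mono hV₁c hV₂c
  obtain ⟨ψ, hψ0, hψ1, _⟩ :=
    exists_continuous_zero_one_of_isClosed isClosed_closure isClosed_closure hdisj
  exact ⟨ψ, V₁, V₂, hV₁, hV₂, hAV₁, hBV₂,
    fun x hx => hψ0 (subset_closure hx), fun x hx => hψ1 (subset_closure hx)⟩

/-- If `T₁` is localized at `Z₁`, `T₂` is localized at `Z₂`, and both commute with the
multiplication actions up to compact operators, then `T₁ T₂` is localized at `Z₁ ∩ Z₂`. -/
theorem stmt10 {H₁ H₂ H₃ : Type*}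
    [NormedAddCommGroup H₁] [InnerProductSpace ℂ H₁] [CompleteSpace H₁]
    [NormedAddCommGroup H₂] [InnerProductSpace ℂ H₂] [CompleteSpace H₂]
    [NormedAddCommGroup H₃] [InnerProductSpace ℂ H₃] [CompleteSpace H₃]
    (π₁ : C(X, ℂ) →⋆ₐ[ℂ] (H₁ →L[ℂ] H₁)) (π₂ : C(X, ℂ) →⋆ₐ[ℂ] (H₂ →L[ℂ] H₂))
    (π₃ : C(X, ℂ) →⋆ₐ[ℂ] (H₃ →L[ℂ] H₃))
    (Z₁ Z₂ : Set X) (hZ₁ : IsClosed Z₁) (hZ₂ : IsClosed Z₂)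
    (T₁ : H₂ →L[ℂ] H₃) (T₂ : H₁ →L[ℂ] H₂)
    (hT₁ : IsLocalizedAt π₂ π₃ T₁ Z₁) (hT₁' : IsPseudolocal π₂ π₃ T₁)
    (hT₂ : IsLocalizedAt π₁ π₂ T₂ Z₂) (hT₂' : IsPseudolocal π₁ π₂ T₂) :
    IsLocalizedAt π₁ π₃ (T₁ ∘L T₂) (Z₁ ∩ Z₂) := by
  rintro φ ⟨U, hU, hZU, hφU⟩
  -- Separate the closed sets `Z₁ \ U` and `Z₂ \ U`.
  have hA : IsClosed (Z₁ \ U) := hZ₁.sdiff hU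
  have hB : IsClosed (Z₂ \ U) := hZ₂.sdiff hU
  have hAB : Disjoint (Z₁ \ U) (Z₂ \ U) := by
    rw [Set.disjoint_left]
    rintro x ⟨h1, hnU⟩ ⟨h2, _⟩
    exact hnU (hZU ⟨h1, h2⟩)
  obtain ⟨ψ, V₁, V₂, hV₁, hV₂, hAV₁, hBV₂, hψ0, hψ1⟩ := urysohn_nbhd hA hB hAB
  -- complexify ψ
  set ψc : C(X, ℂ) := ⟨fun x => (ψ x : ℂ), by fun_prop⟩ with hψc
  set φ₁ : C(X, ℂ) := φ * ψc with hφ₁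
  set φ₂ : C(X, ℂ) := φ * (1 - ψc) with hφ₂
  have hsum : φ = φ₁ + φ₂ := by
    ext x
    show φ x = φ x * ψc x + φ x * ((1:C(X,ℂ)) x - ψc x)
    simp
    ring
  -- φ₁ vanishes on a neighborhood of Z₁
  have h1 : ∃ W : Set X, IsOpen W ∧ Z₁ ⊆ W ∧ ∀ x ∈ W, φ₁ x = 0 := by
    refine ⟨V₁ ∪ U, hV₁.union hU, ?_, ?_⟩
    · intro z hz
      by_cases hzU : z ∈ U
      · exact Or.inr hzU
      · exact Or.inl (hAV₁ ⟨hz, hzU⟩)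
    · rintro x (hx | hx)
      · simp [hφ₁, hψc, hψ0 x hx]
      · simp [hφ₁, hφU x hx]
  -- φ₂ vanishes on a neighborhood of Z₂
  have h2 : ∃ W : Set X, IsOpen W ∧ Z₂ ⊆ W ∧ ∀ x ∈ W, φ₂ x = 0 := by
    refine ⟨V₂ ∪ U, hV₂.union hU, ?_, ?_⟩
    · intro z hz
      by_cases hzU : z ∈ U
      · exact Or.inr hzU
      · exact Or.inl (hBV₂ ⟨hz, hzU⟩)
    · rintro x (hx | hx)
      · simp [hφ₂, hψc, hψ1 x hx]
      · simp [hφ₂, hφU x hx]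
  obtain ⟨hT₁l, hT₁r⟩ := hT₁ φ₁ h1
  obtain ⟨hT₂l, hT₂r⟩ := hT₂ φ₂ h2
  constructor
  · -- π₃ φ ∘L (T₁ ∘L T₂) is compact
    have heq : π₃ φ ∘L (T₁ ∘L T₂) =
        ((π₃ φ₁ ∘L T₁) ∘L T₂) +
          (((π₃ φ₂ ∘L T₁ - T₁ ∘L π₂ φ₂) ∘L T₂) + (T₁ ∘L (π₂ φ₂ ∘L T₂))) := by
      rw [hsum, map_add]
      ext x
      simp [ContinuousLinearMap.comp_apply]
    rw [heq]
    simp only [ContinuousLinearMap.coe_add', ContinuousLinearMap.coe_sub',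
      ContinuousLinearMap.coe_comp']
    refine IsCompactOperator.add ?_ (IsCompactOperator.add ?_ ?_)
    · exact hT₁l.comp_clm T₂
    · have h := hT₁' φ₂
      simp only [ContinuousLinearMap.coe_sub', ContinuousLinearMap.coe_comp'] at h
      exact h.comp_clm T₂
    · exact hT₂l.clm_comp T₁
  · -- (T₁ ∘L T₂) ∘L π₁ φ is compact
    have heq : (T₁ ∘L T₂) ∘L π₁ φ =
        (T₁ ∘L (T₂ ∘L π₁ φ₂)) +
          ((T₁ ∘L (T₂ ∘L π₁ φ₁ - π₂ φ₁ ∘L T₂)) + ((T₁ ∘L π₂ φ₁) ∘L T₂)) := by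
      rw [hsum, map_add]
      ext x
      simp [ContinuousLinearMap.comp_apply]
      abel
    rw [heq]
    simp only [ContinuousLinearMap.coe_add', ContinuousLinearMap.coe_sub',
      ContinuousLinearMap.coe_comp']
    refine IsCompactOperator.add ?_ (IsCompactOperator.add ?_ ?_)
    · exact hT₂r.clm_comp T₁
    · have h := (hT₂' φ₁).neg
      rw [← ContinuousLinearMap.coe_neg', neg_sub] at h
      simp only [ContinuousLinearMap.coe_sub', ContinuousLinearMap.coe_comp'] at h
      exact h.clm_comp T₁
    · exact hT₁r.comp_clm T₂
end

section
/- In the abstract localization framework: if T₁: H₂ → H₃ is localized at the closed set Z₁ ⊆ X and pseudolocal, and T₂: H₁ → H₂ is localized at the closed set Z₂ ⊆ X and pseudolocal, then the composition T₁T₂ is localized at Z₁ ∩ Z₂ and pseudolocal. -/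
open MeasureTheory

variable {X : Type*} [MetricSpace X] [CompactSpace X]

/-- Splitting lemma: a function vanishing on an open neighborhood of `Z₁ ∩ Z₂` can be
written as `φ₁ + φ₂` where `φᵢ` vanishes on a neighborhood of `Zᵢ`. -/
lemma split_vanishing (Z₁ Z₂ U : Set X) (hZ₁ : IsClosed Z₁) (hZ₂ : IsClosed Z₂)
    (hU : IsOpen U) (hsub : Z₁ ∩ Z₂ ⊆ U) (φ : C(X, ℂ)) (hφ : ∀ x ∈ U, φ x = 0) :
    ∃ φ₁ φ₂ : C(X, ℂ), φ = φ₁ + φ₂ ∧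
      (∃ V : Set X, IsOpen V ∧ Z₁ ⊆ V ∧ ∀ x ∈ V, φ₁ x = 0) ∧
      (∃ V : Set X, IsOpen V ∧ Z₂ ⊆ V ∧ ∀ x ∈ V, φ₂ x = 0) := by
  set A : Set X := Z₁ \ U with hA
  set B : Set X := Z₂ \ U with hB
  have hAB : Disjoint A B := by
    rw [Set.disjoint_left]
    rintro x ⟨hx1, hxU⟩ ⟨hx2, _⟩
    exact hxU (hsub ⟨hx1, hx2⟩)
  have hAc : IsCompact A := ((hZ₁.sdiff hU).isCompact)
  have hBc : IsClosed B := hZ₂.sdiff hU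
  obtain ⟨δ, hδ, hdisj⟩ := hAB.exists_cthickenings hAc hBc
  obtain ⟨f, hf0, hf1, _⟩ := exists_continuous_zero_one_of_isClosed
    Metric.isClosed_cthickening Metric.isClosed_cthickening hdisj
  set ψ : C(X, ℂ) := (⟨Complex.ofReal, Complex.continuous_ofReal⟩ : C(ℝ, ℂ)).comp f with hψ
  refine ⟨ψ * φ, (1 - ψ) * φ, ?_, ?_, ?_⟩
  · ext x
    simp [ψ]
    ring
  · refine ⟨U ∪ Metric.thickening δ A, hU.union Metric.isOpen_thickening, ?_, ?_⟩
    · intro x hx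
      by_cases hxU : x ∈ U
      · exact Or.inl hxU
      · exact Or.inr (Metric.self_subset_thickening hδ _ ⟨hx, hxU⟩)
    · rintro x (hx | hx)
      · simp [hφ x hx]
      · have : f x = 0 := hf0 (Metric.thickening_subset_cthickening _ _ hx)
        simp [ψ, this]
  · refine ⟨U ∪ Metric.thickening δ B, hU.union Metric.isOpen_thickening, ?_, ?_⟩
    · intro x hx
      by_cases hxU : x ∈ U
      · exact Or.inl hxU
      · exact Or.inr (Metric.self_subset_thickening hδ _ ⟨hx, hxU⟩)
    · rintro x (hx | hx)
      · simp [hφ x hx]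
      · have : f x = 1 := hf1 (Metric.thickening_subset_cthickening _ _ hx)
        simp [ψ, this]

/-- If `T₁ : H₂ → H₃` is localized at the closed set `Z₁` and pseudolocal, and
`T₂ : H₁ → H₂` is localized at the closed set `Z₂` and pseudolocal, then the composition
`T₁ T₂` is localized at `Z₁ ∩ Z₂` and pseudolocal. -/
theorem stmt11 {H₁ H₂ H₃ : Type*}
    [NormedAddCommGroup H₁] [InnerProductSpace ℂ H₁] [CompleteSpace H₁]
    [NormedAddCommGroup H₂] [InnerProductSpace ℂ H₂] [CompleteSpace H₂]
    [NormedAddCommGroup H₃] [InnerProductSpace ℂ H₃] [CompleteSpace H₃]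
    (π₁ : C(X, ℂ) →⋆ₐ[ℂ] (H₁ →L[ℂ] H₁)) (π₂ : C(X, ℂ) →⋆ₐ[ℂ] (H₂ →L[ℂ] H₂))
    (π₃ : C(X, ℂ) →⋆ₐ[ℂ] (H₃ →L[ℂ] H₃))
    (Z₁ Z₂ : Set X) (hZ₁ : IsClosed Z₁) (hZ₂ : IsClosed Z₂)
    (T₁ : H₂ →L[ℂ] H₃) (T₂ : H₁ →L[ℂ] H₂)
    (hT₁ : IsLocalizedAt π₂ π₃ T₁ Z₁) (hT₁' : IsPseudolocal π₂ π₃ T₁)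
    (hT₂ : IsLocalizedAt π₁ π₂ T₂ Z₂) (hT₂' : IsPseudolocal π₁ π₂ T₂) :
    IsLocalizedAt π₁ π₃ (T₁ ∘L T₂) (Z₁ ∩ Z₂) ∧ IsPseudolocal π₁ π₃ (T₁ ∘L T₂) := by
  constructor
  · intro φ ⟨U, hUopen, hUsub, hφU⟩
    obtain ⟨φ₁, φ₂, hsplit, hV₁, hV₂⟩ :=
      split_vanishing Z₁ Z₂ U hZ₁ hZ₂ hUopen hUsub φ hφU
    constructor
    · -- π₃ φ ∘L (T₁ ∘L T₂) compact
      have c₁ : IsCompactOperator (⇑(π₃ φ₁ ∘L T₁) ∘ ⇑T₂) :=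
        ((hT₁ φ₁ hV₁).1).comp_clm T₂
      have c₂ : IsCompactOperator (⇑(π₃ φ₂ ∘L T₁ - T₁ ∘L π₂ φ₂) ∘ ⇑T₂) :=
        (hT₁' φ₂).comp_clm T₂
      have c₃ : IsCompactOperator (⇑T₁ ∘ ⇑(π₂ φ₂ ∘L T₂)) :=
        ((hT₂ φ₂ hV₂).1).clm_comp T₁
      have hc := (c₁.add c₂).add c₃
      have heq : ⇑(π₃ φ ∘L (T₁ ∘L T₂)) =
          (⇑(π₃ φ₁ ∘L T₁) ∘ ⇑T₂ + ⇑(π₃ φ₂ ∘L T₁ - T₁ ∘L π₂ φ₂) ∘ ⇑T₂) +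
            ⇑T₁ ∘ ⇑(π₂ φ₂ ∘L T₂) := by
        ext x
        simp [hsplit, map_add, Function.comp]
        abel
      rw [heq]
      exact hc
    · -- (T₁ ∘L T₂) ∘L π₁ φ compact
      have c₁ : IsCompactOperator (⇑T₁ ∘ ⇑(T₂ ∘L π₁ φ₂)) :=
        ((hT₂ φ₂ hV₂).2).clm_comp T₁
      have c₂ : IsCompactOperator (⇑(T₁ ∘L π₂ φ₁) ∘ ⇑T₂) :=
        ((hT₁ φ₁ hV₁).2).comp_clm T₂
      have c₃ : IsCompactOperator (⇑T₁ ∘ ⇑(π₂ φ₁ ∘L T₂ - T₂ ∘L π₁ φ₁)) :=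
        (hT₂' φ₁).clm_comp T₁
      have hc := (c₁.add c₂).sub c₃
      have heq : ⇑((T₁ ∘L T₂) ∘L π₁ φ) =
          (⇑T₁ ∘ ⇑(T₂ ∘L π₁ φ₂) + ⇑(T₁ ∘L π₂ φ₁) ∘ ⇑T₂) -
            ⇑T₁ ∘ ⇑(π₂ φ₁ ∘L T₂ - T₂ ∘L π₁ φ₁) := by
        ext x
        simp [hsplit, map_add, map_sub, Function.comp]
        abel
      rw [heq]
      exact hc
  · intro φ
    have c₁ : IsCompactOperator (⇑(π₃ φ ∘L T₁ - T₁ ∘L π₂ φ) ∘ ⇑T₂) :=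
      (hT₁' φ).comp_clm T₂
    have c₂ : IsCompactOperator (⇑T₁ ∘ ⇑(π₂ φ ∘L T₂ - T₂ ∘L π₁ φ)) :=
      (hT₂' φ).clm_comp T₁
    have hc := c₁.add c₂
    have heq : ⇑(π₃ φ ∘L (T₁ ∘L T₂) - (T₁ ∘L T₂) ∘L π₁ φ) =
        ⇑(π₃ φ ∘L T₁ - T₁ ∘L π₂ φ) ∘ ⇑T₂ + ⇑T₁ ∘ ⇑(π₂ φ ∘L T₂ - T₂ ∘L π₁ φ) := by
      ext x
      simp [map_sub, Function.comp]
    rw [heq]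
    exact hc
end
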